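/- Let X ~ N(0, h) with h > 0 and E_c := exp(c·X − c²h/2). Define D(E_c) := c·h·E_c on the span of exponentials. Then for all c, d ∈ ℂ: ⟨D E_c, E_d⟩ = ⟨E_c, (M_X − D) E_d⟩, where M_X is multiplication by X and ⟨f,g⟩ = E[f·conj(g)]. Equivalently, c·h·exp(c·conj(d)·h) = E[E_c · conj(X·E_d − d·h·E_d)]. -/

import Mathlib

/-!
Multiplying out, `E_c · conj ((X - d h) E_d) = e^{-(c² + k²) h / 2} (X - k h) e^{z X}` with
`k = conj d`, `z = c + k`. Both `E[e^{z X}] = e^{h z² / 2}` and `E[X e^{z X}] = h z e^{h z² / 2}`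
come from the complex moment generating function of the Gaussian and its derivative, and
`h z - k h = c h`, `h z² / 2 - (c² + k²) h / 2 = c k h`.
-/

open MeasureTheory ProbabilityTheory Complex NNReal
open scoped ComplexConjugate

namespace ProbabilityTheory

variable {Ω : Type*} [MeasurableSpace Ω] {P : Measure Ω} {X : Ω → ℝ}
  {μ : ℝ} {v : ℝ≥0}

lemma integrableExpSet_eq_univ_of_map_eq_gaussianReal (hX : P.map X = gaussianReal μ v) :
    integrableExpSet X P = Set.univ := by
  have : NeZero P := ⟨fun hP ↦
    IsProbabilityMeasure.ne_zero (gaussianReal μ v) (by rw [← hX, hP, Measure.map_zero])⟩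
  ext t
  simp only [integrableExpSet, Set.mem_ofPred_eq, Set.mem_univ, iff_true]
  rw [← mgf_pos_iff, mgf_gaussianReal hX]
  exact Real.exp_pos _

lemma re_mem_interior_integrableExpSet_of_map_eq_gaussianReal
    (hX : P.map X = gaussianReal μ v) (z : ℂ) : z.re ∈ interior (integrableExpSet X P) := by
  simp [integrableExpSet_eq_univ_of_map_eq_gaussianReal hX]

lemma integrable_cexp_mul_of_map_eq_gaussianReal (hX : P.map X = gaussianReal μ v) (z : ℂ) :
    Integrable (fun ω ↦ cexp (z * X ω)) P :=
  integrable_cexp_mul_of_re_mem_interior_integrableExpSet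
    (re_mem_interior_integrableExpSet_of_map_eq_gaussianReal hX z)

lemma integrable_mul_cexp_mul_of_map_eq_gaussianReal (hX : P.map X = gaussianReal μ v) (z : ℂ) :
    Integrable (fun ω ↦ X ω * cexp (z * X ω)) P := by
  simpa using integrable_pow_mul_cexp_of_re_mem_interior_integrableExpSet
    (re_mem_interior_integrableExpSet_of_map_eq_gaussianReal hX z) 1

lemma integral_cexp_mul_of_map_eq_gaussianReal (hX : P.map X = gaussianReal μ v) (z : ℂ) :
    ∫ ω, cexp (z * X ω) ∂P = cexp (z * μ + v * z ^ 2 / 2) :=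
  complexMGF_gaussianReal hX z

lemma integral_mul_cexp_of_map_eq_gaussianReal (hX : P.map X = gaussianReal μ v) (z : ℂ) :
    ∫ ω, X ω * cexp (z * X ω) ∂P = (μ + v * z) * cexp (z * μ + v * z ^ 2 / 2) := by
  have hmgf : complexMGF X P = fun z ↦ cexp (z * μ + v * z ^ 2 / 2) :=
    funext (complexMGF_gaussianReal hX)
  have hexponent : HasDerivAt (fun z : ℂ ↦ z * μ + v * z ^ 2 / 2) (μ + v * z) z := by
    refine (((hasDerivAt_id' z).mul_const (μ : ℂ)).add
      (((hasDerivAt_pow 2 z).const_mul (v : ℂ)).div_const 2)).congr_deriv ?_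
    push_cast; ring
  have hderiv := hexponent.cexp
  rw [mul_comm] at hderiv
  have hmgf_deriv := hasDerivAt_complexMGF
    (re_mem_interior_integrableExpSet_of_map_eq_gaussianReal hX z)
  exact (hmgf ▸ hmgf_deriv).unique hderiv

end ProbabilityTheory

lemma cexp_mul_conj_sub_eq (c d : ℂ) (h x : ℝ) :
    cexp (c * x - c ^ 2 * h / 2) *
        conj (x * cexp (d * x - d ^ 2 * h / 2) - d * h * cexp (d * x - d ^ 2 * h / 2)) =
      cexp (-(c ^ 2 + conj d ^ 2) * h / 2) * (x * cexp ((c + conj d) * x)) -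
        cexp (-(c ^ 2 + conj d ^ 2) * h / 2) * (conj d * h) * cexp ((c + conj d) * x) := by
  simp only [map_sub, map_mul, ← Complex.exp_conj, map_div₀, map_pow, Complex.conj_ofReal,
    map_ofNat]
  have hexp : cexp (c * x - c ^ 2 * h / 2) * cexp (conj d * x - conj d ^ 2 * h / 2) =
      cexp (-(c ^ 2 + conj d ^ 2) * h / 2) * cexp ((c + conj d) * x) := by
    rw [← Complex.exp_add, ← Complex.exp_add]
    ring_nf
  linear_combination (x - conj d * h) * hexp

theorem stmt_10_general {Ω : Type*} [MeasurableSpace Ω] (P : Measure Ω)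
    (X : Ω → ℝ) (h : ℝ≥0)
    (hlaw : Measure.map X P = gaussianReal 0 h) (c d : ℂ) :
    c * (h : ℝ) * Complex.exp (c * (starRingEnd ℂ) d * (h : ℝ)) =
    ∫ ω, Complex.exp (c * X ω - c ^ 2 * (h : ℝ) / 2) *
        (starRingEnd ℂ) ((X ω : ℂ) * Complex.exp (d * X ω - d ^ 2 * (h : ℝ) / 2) -
          d * (h : ℝ) * Complex.exp (d * X ω - d ^ 2 * (h : ℝ) / 2)) ∂P := by
  simp_rw [cexp_mul_conj_sub_eq]
  rw [integral_sub ((integrable_mul_cexp_mul_of_map_eq_gaussianReal hlaw _).const_mul _)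
      ((integrable_cexp_mul_of_map_eq_gaussianReal hlaw _).const_mul _),
    integral_const_mul, integral_const_mul, integral_mul_cexp_of_map_eq_gaussianReal hlaw,
    integral_cexp_mul_of_map_eq_gaussianReal hlaw]
  have hexp : cexp (-(c ^ 2 + conj d ^ 2) * h / 2) *
      cexp ((c + conj d) * 0 + h * (c + conj d) ^ 2 / 2) = cexp (c * conj d * h) := by
    rw [← Complex.exp_add]
    ring_nf
  push_cast
  linear_combination (-(c * h)) * hexp

/-- the adjoint relation ⟨D E_c, E_d⟩ = ⟨E_c, (M_X − D) E_d⟩. -/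
theorem stmt_10 {Ω : Type*} [MeasurableSpace Ω] (P : Measure Ω) [IsProbabilityMeasure P]
    (X : Ω → ℝ) (hX : Measurable X) (h : ℝ≥0) (hpos : 0 < h)
    (hlaw : Measure.map X P = gaussianReal 0 h) (c d : ℂ) :
    c * (h : ℝ) * Complex.exp (c * (starRingEnd ℂ) d * (h : ℝ)) =
    ∫ ω, Complex.exp (c * X ω - c ^ 2 * (h : ℝ) / 2) *
        (starRingEnd ℂ) ((X ω : ℂ) * Complex.exp (d * X ω - d ^ 2 * (h : ℝ) / 2) -
          d * (h : ℝ) * Complex.exp (d * X ω - d ^ 2 * (h : ℝ) / 2)) ∂P :=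
  stmt_10_general P X h hlaw c d
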